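/- Let g : ℝᵠ → ℝ be μ-strongly convex and L-smooth with minimizer y*, let 0 < λ ≤ 1/(2L + 2μ), 0 < β < 1, and T ≥ 1. Given y₀ ∈ ℝᵠ and directions D₀, …, D_{T-1}, define y_{t+1} = y_t - λβ D_t for t = 0,…,T-1. Then ‖y_T - y*‖² ≤ (1 - (μ/2)λβ)^T ‖y₀ - y*‖² + (4/μ)λβ ∑_{t=0}^{T-1} ‖∇g(y_t) - D_t‖² - (1/2)λ²β ∑_{t=0}^{T-1} (1 - (μ/2)λβ)^{T-1-t} ‖D_t‖². -/

import Mathlib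

/-!
Expanding `‖y - λβ D - y*‖²` with `D = ∇g(y) - e`, strong convexity pays for the cross term
`⟪∇g(y), y - y*⟫` with a gain `μ ‖y - y*‖²`, Young's inequality absorbs the error term
`⟪e, y - y*⟫`, and the descent-lemma bound `‖∇g(y)‖² ≤ 2L (g(y) - g(y*))` together with
`λ ≤ 1/(2L + 2μ)` leaves room for the negative multiple of `‖D‖²`. Unrolling this one-step
contraction gives the discounted sums.
-/

open scoped RealInnerProductSpace
open Finset

variable {E : Type*} [NormedAddCommGroup E] [InnerProductSpace ℝ E]

theorem two_mul_inner_le_mul_sq_add_inv_mul_sq {c : ℝ} (hc : 0 < c) (u v : E) :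
    2 * ⟪u, v⟫ ≤ c * ‖u‖ ^ 2 + c⁻¹ * ‖v‖ ^ 2 := by
  have hsq : 0 ≤ c⁻¹ * (c * ‖u‖ - ‖v‖) ^ 2 := by positivity
  have hexp : c⁻¹ * (c * ‖u‖ - ‖v‖) ^ 2 = c * ‖u‖ ^ 2 + c⁻¹ * ‖v‖ ^ 2 - 2 * (‖u‖ * ‖v‖) := by
    field_simp
    ring
  linarith [real_inner_le_norm u v]

theorem le_of_strongly_convex_of_lipschitz_gradient [Nontrivial E] {f : E → ℝ} {f' : E → E}
    {μ L : ℝ} (hsc : ∀ y z, f z ≥ f y + ⟪f' y, z - y⟫ + μ / 2 * ‖z - y‖ ^ 2)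
    (hlip : ∀ u w, ‖f' u - f' w‖ ≤ L * ‖u - w‖) : μ ≤ L := by
  obtain ⟨u, hu⟩ := exists_ne (0 : E)
  have hmono : μ * ‖u‖ ^ 2 ≤ ⟪f' u - f' 0, u⟫ := by
    have h₁ := hsc u 0
    have h₂ := hsc 0 u
    simp only [zero_sub, sub_zero, inner_neg_right, norm_neg] at h₁ h₂
    rw [inner_sub_left]
    linarith
  have hcs : ⟪f' u - f' 0, u⟫ ≤ L * ‖u‖ ^ 2 := by
    calc ⟪f' u - f' 0, u⟫ ≤ ‖f' u - f' 0‖ * ‖u‖ := real_inner_le_norm _ _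
      _ ≤ L * ‖u - 0‖ * ‖u‖ := by gcongr; exact hlip u 0
      _ = L * ‖u‖ ^ 2 := by rw [sub_zero]; ring
  exact le_of_mul_le_mul_right (hmono.trans hcs) (by positivity)

theorem le_add_inner_add_of_lipschitz_gradient [CompleteSpace E] {f : E → ℝ} {f' : E → E} {L : ℝ}
    (hf : ∀ x, HasGradientAt f (f' x) x) (hlip : ∀ u w, ‖f' u - f' w‖ ≤ L * ‖u - w‖)
    (x v : E) : f (x + v) ≤ f x + ⟪f' x, v⟫ + L / 2 * ‖v‖ ^ 2 := by
  set φ : ℝ → ℝ := fun t ↦ f (x + t • v) - t * ⟪f' x, v⟫ - L / 2 * t ^ 2 * ‖v‖ ^ 2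
  have hφ : ∀ t, HasDerivAt φ (⟪f' (x + t • v) - f' x, v⟫ - L * t * ‖v‖ ^ 2) t := by
    intro t
    have hline : HasDerivAt (fun s : ℝ ↦ x + s • v) v t := by
      simpa using ((hasDerivAt_id t).smul_const v).const_add x
    have hfline := (hf (x + t • v)).hasFDerivAt.comp_hasDerivAt t hline
    simp only [InnerProductSpace.toDual_apply_apply] at hfline
    refine ((hfline.sub ((hasDerivAt_id t).mul_const ⟪f' x, v⟫)).sub
      (((hasDerivAt_pow 2 t).const_mul (L / 2)).mul_const (‖v‖ ^ 2))).congr_deriv ?_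
    rw [inner_sub_left]
    push_cast
    ring
  have hanti : AntitoneOn φ (Set.Ici 0) := by
    refine antitoneOn_of_hasDerivWithinAt_nonpos (convex_Ici 0)
      (fun t _ ↦ (hφ t).continuousAt.continuousWithinAt) (fun t _ ↦ (hφ t).hasDerivWithinAt) ?_
    intro t ht
    rw [interior_Ici] at ht
    have ht : 0 ≤ t := ht.le
    calc ⟪f' (x + t • v) - f' x, v⟫ - L * t * ‖v‖ ^ 2
        ≤ ‖f' (x + t • v) - f' x‖ * ‖v‖ - L * t * ‖v‖ ^ 2 := by gcongr; exact real_inner_le_norm _ _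
      _ ≤ L * ‖t • v‖ * ‖v‖ - L * t * ‖v‖ ^ 2 := by
          gcongr; simpa using hlip (x + t • v) x
      _ = 0 := by rw [norm_smul, Real.norm_of_nonneg ht]; ring
  have := hanti Set.self_mem_Ici (zero_le_one' ℝ) zero_le_one
  simp only [φ, one_smul, one_mul, one_pow, mul_one, zero_smul, add_zero, zero_mul, sub_zero,
    ne_eq, OfNat.ofNat_ne_zero, not_false_eq_true, zero_pow, mul_zero] at this
  linarith

theorem sq_norm_gradient_le_of_forall_le [CompleteSpace E] {f : E → ℝ} {f' : E → E} {L : ℝ}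
    (hL : 0 < L) (hf : ∀ x, HasGradientAt f (f' x) x)
    (hlip : ∀ u w, ‖f' u - f' w‖ ≤ L * ‖u - w‖) {xs : E} (hmin : ∀ z, f xs ≤ f z) (x : E) :
    ‖f' x‖ ^ 2 ≤ 2 * L * (f x - f xs) := by
  have hdesc := le_add_inner_add_of_lipschitz_gradient hf hlip x (-L⁻¹ • f' x)
  rw [inner_smul_right, real_inner_self_eq_norm_sq, norm_smul, mul_pow, norm_neg,
    Real.norm_of_nonneg (inv_nonneg.2 hL.le)] at hdesc
  have hquad : L⁻¹ * ‖f' x‖ ^ 2 ≤ 2 * (f x - f xs) := by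
    have := hmin (x + -L⁻¹ • f' x)
    have e : L / 2 * (L⁻¹ ^ 2 * ‖f' x‖ ^ 2) = L⁻¹ / 2 * ‖f' x‖ ^ 2 := by field_simp
    linarith
  calc ‖f' x‖ ^ 2 = L * (L⁻¹ * ‖f' x‖ ^ 2) := by field_simp
    _ ≤ L * (2 * (f x - f xs)) := by gcongr
    _ = _ := by ring

theorem norm_sub_smul_sub_sq_le {f : E → ℝ} {μ lam β : ℝ} {x xs d D : E} (hμ : 0 < μ)
    (hlam : 0 < lam) (hμlam : 3 * μ * lam ≤ 1) (hβ : 0 ≤ β) (hβ1 : β ≤ 1)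
    (hsc : f xs ≥ f x + ⟪d, xs - x⟫ + μ / 2 * ‖xs - x‖ ^ 2)
    (hpl : lam * ‖d‖ ^ 2 ≤ f x - f xs) :
    ‖x - (lam * β) • D - xs‖ ^ 2 ≤ (1 - μ / 2 * lam * β) * ‖x - xs‖ ^ 2
      + 4 / μ * lam * β * ‖d - D‖ ^ 2 - 1 / 2 * lam ^ 2 * β * ‖D‖ ^ 2 := by
  obtain ⟨a, rfl⟩ : ∃ a, x = xs + a := ⟨x - xs, by abel⟩
  obtain ⟨e, rfl⟩ : ∃ e, D = d - e := ⟨d - D, by abel⟩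
  rw [add_sub_cancel_left, sub_sub_cancel]
  rw [show xs - (xs + a) = -a by abel, inner_neg_right, norm_neg] at hsc
  have hs : 0 ≤ lam * β := by positivity
  have hexp : ‖xs + a - (lam * β) • (d - e) - xs‖ ^ 2
      = ‖a‖ ^ 2 - 2 * (lam * β) * (⟪d, a⟫ - ⟪e, a⟫) + (lam * β) ^ 2 * ‖d - e‖ ^ 2 := by
    rw [show xs + a - (lam * β) • (d - e) - xs = a - (lam * β) • (d - e) by abel, norm_sub_sq_real,
      inner_smul_right, norm_smul, Real.norm_of_nonneg hs, inner_sub_right, real_inner_comm a,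
      real_inner_comm a]
    ring
  have herr : 2 * ⟪e, a⟫ ≤ 2 / μ * ‖e‖ ^ 2 + μ / 2 * ‖a‖ ^ 2 := by
    simpa using two_mul_inner_le_mul_sq_add_inv_mul_sq (by positivity : 0 < 2 / μ) e a
  -- `(1 + c) ‖d‖² + (1 + c⁻¹) ‖e‖²` with `c = 1/3`
  have hD : ‖d - e‖ ^ 2 ≤ 4 / 3 * ‖d‖ ^ 2 + 4 * ‖e‖ ^ 2 := by
    have := two_mul_inner_le_mul_sq_add_inv_mul_sq (by norm_num : (0 : ℝ) < 1 / 3) d (-e)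
    rw [inner_neg_right, norm_neg] at this
    rw [norm_sub_sq_real]
    linarith
  have hbudget : (lam * β + lam / 2) * ‖d - e‖ ^ 2 ≤ 2 * (f (xs + a) - f xs) + 2 / μ * ‖e‖ ^ 2 := by
    have hslam : lam * β ≤ lam := mul_le_of_le_one_right hlam.le hβ1
    have hlamμ : 6 * lam ≤ 2 / μ := by rw [le_div_iff₀ hμ]; linarith
    calc (lam * β + lam / 2) * ‖d - e‖ ^ 2 ≤ 3 / 2 * lam * (4 / 3 * ‖d‖ ^ 2 + 4 * ‖e‖ ^ 2) := by
          gcongr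
          linarith
      _ = 2 * (lam * ‖d‖ ^ 2) + 6 * lam * ‖e‖ ^ 2 := by ring
      _ ≤ 2 * (f (xs + a) - f xs) + 2 / μ * ‖e‖ ^ 2 := by gcongr
  rw [hexp]
  linear_combination 2 * mul_le_mul_of_nonneg_left hsc hs + mul_le_mul_of_nonneg_left herr hs +
    mul_le_mul_of_nonneg_left hbudget hs

theorem le_pow_mul_add_sum_sub_sum_of_le {u a b : ℕ → ℝ} {ρ : ℝ} (hρ0 : 0 ≤ ρ) (hρ1 : ρ ≤ 1)
    (ha : ∀ t, 0 ≤ a t) {n : ℕ} (h : ∀ t < n, u (t + 1) ≤ ρ * u t + a t - b t) :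
    u n ≤ ρ ^ n * u 0 + ∑ t ∈ range n, a t - ∑ t ∈ range n, ρ ^ (n - 1 - t) * b t := by
  induction n with
  | zero => simp
  | succ n ih =>
    have ih := ih fun t ht ↦ h t (by omega)
    have hdiscount : ∑ t ∈ range (n + 1), ρ ^ (n + 1 - 1 - t) * b t
        = ρ * ∑ t ∈ range n, ρ ^ (n - 1 - t) * b t + b n := by
      rw [sum_range_succ, mul_sum, Nat.add_sub_cancel, Nat.sub_self, pow_zero, one_mul]
      congr 1
      refine sum_congr rfl fun t ht ↦ ?_
      rw [← mul_assoc, ← pow_succ', show n - 1 - t + 1 = n - t by have := mem_range.1 ht; omega]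
    have hA : ρ * ∑ t ∈ range n, a t ≤ ∑ t ∈ range n, a t :=
      mul_le_of_le_one_left (sum_nonneg fun t _ ↦ ha t) hρ1
    rw [hdiscount, sum_range_succ, pow_succ']
    nlinarith [h n n.lt_succ_self, mul_le_mul_of_nonneg_left ih hρ0]

theorem stmt_4_general {q : ℕ} (g : EuclideanSpace ℝ (Fin q) → ℝ)
    (gradg : EuclideanSpace ℝ (Fin q) → EuclideanSpace ℝ (Fin q))
    (hgrad : ∀ y, HasGradientAt g (gradg y) y)
    (μ L : ℝ) (hμ : 0 < μ)
    (hsc : ∀ y z, g z ≥ g y + ⟪gradg y, z - y⟫ + (μ / 2) * ‖z - y‖ ^ 2)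
    (hsmooth : ∀ u w, ‖gradg u - gradg w‖ ≤ L * ‖u - w‖)
    (ystar : EuclideanSpace ℝ (Fin q)) (hmin : ∀ z, g ystar ≤ g z)
    (lam β : ℝ) (hlam : 0 < lam) (hlam' : lam ≤ 1 / (2 * L + 2 * μ))
    (hβ : 0 < β) (hβ' : β < 1) (T : ℕ)
    (y D : ℕ → EuclideanSpace ℝ (Fin q))
    (hiter : ∀ t < T, y (t + 1) = y t - (lam * β) • D t) :
    ‖y T - ystar‖ ^ 2 ≤ (1 - (μ / 2) * lam * β) ^ T * ‖y 0 - ystar‖ ^ 2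
      + (4 / μ) * lam * β * ∑ t ∈ Finset.range T, ‖gradg (y t) - D t‖ ^ 2
      - (1 / 2) * lam ^ 2 * β *
        ∑ t ∈ Finset.range T, (1 - (μ / 2) * lam * β) ^ (T - 1 - t) * ‖D t‖ ^ 2 := by
  obtain hE | hE := subsingleton_or_nontrivial (EuclideanSpace ℝ (Fin q))
  · simp [Subsingleton.elim _ (0 : EuclideanSpace ℝ (Fin q))]
  have hμL : μ ≤ L := le_of_strongly_convex_of_lipschitz_gradient hsc hsmooth
  have hL : 0 < L := hμ.trans_le hμL
  have hstep_size : 2 * L * lam + 2 * μ * lam ≤ 1 := by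
    rw [le_div_iff₀ (by positivity)] at hlam'
    linarith
  have hμlam : 4 * μ * lam ≤ 1 := by linarith [mul_le_mul_of_nonneg_right hμL hlam.le]
  have hpl : ∀ x, lam * ‖gradg x‖ ^ 2 ≤ g x - g ystar := fun x ↦ by
    calc lam * ‖gradg x‖ ^ 2 ≤ lam * (2 * L * (g x - g ystar)) := by
          gcongr; exact sq_norm_gradient_le_of_forall_le hL hgrad hsmooth hmin x
      _ = 2 * L * lam * (g x - g ystar) := by ring
      _ ≤ g x - g ystar := mul_le_of_le_one_left (sub_nonneg.2 (hmin x))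
        (by linarith [mul_pos hμ hlam])
  simp_rw [mul_sum, mul_left_comm (1 / 2 * lam ^ 2 * β)]
  refine le_pow_mul_add_sum_sub_sum_of_le (u := fun t ↦ ‖y t - ystar‖ ^ 2) ?_ ?_
    (fun t ↦ by positivity) fun t ht ↦ ?_
  · have : μ * lam * β ≤ μ * lam := mul_le_of_le_one_right (by positivity) hβ'.le
    linarith
  · have : 0 < μ * lam * β := by positivity
    linarith
  · rw [hiter t ht]
    exact norm_sub_smul_sub_sq_le hμ hlam (by linarith) hβ.le hβ'.le (hsc _ _) (hpl _)

theorem stmt_4 {q : ℕ} (g : EuclideanSpace ℝ (Fin q) → ℝ)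
    (gradg : EuclideanSpace ℝ (Fin q) → EuclideanSpace ℝ (Fin q))
    (hgrad : ∀ y, HasGradientAt g (gradg y) y)
    (μ L : ℝ) (hμ : 0 < μ)
    (hsc : ∀ y z, g z ≥ g y + ⟪gradg y, z - y⟫ + (μ / 2) * ‖z - y‖ ^ 2)
    (hsmooth : ∀ u w, ‖gradg u - gradg w‖ ≤ L * ‖u - w‖)
    (ystar : EuclideanSpace ℝ (Fin q)) (hmin : ∀ z, g ystar ≤ g z)
    (lam β : ℝ) (hlam : 0 < lam) (hlam' : lam ≤ 1 / (2 * L + 2 * μ))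
    (hβ : 0 < β) (hβ' : β < 1) (T : ℕ) (hT : 1 ≤ T)
    (y D : ℕ → EuclideanSpace ℝ (Fin q))
    (hiter : ∀ t < T, y (t + 1) = y t - (lam * β) • D t) :
    ‖y T - ystar‖ ^ 2 ≤ (1 - (μ / 2) * lam * β) ^ T * ‖y 0 - ystar‖ ^ 2
      + (4 / μ) * lam * β * ∑ t ∈ Finset.range T, ‖gradg (y t) - D t‖ ^ 2
      - (1 / 2) * lam ^ 2 * β *
        ∑ t ∈ Finset.range T, (1 - (μ / 2) * lam * β) ^ (T - 1 - t) * ‖D t‖ ^ 2 :=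
  stmt_4_general g gradg hgrad μ L hμ hsc hsmooth ystar hmin lam β hlam hlam' hβ hβ' T y D hiter
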